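/- Distribution function of a single spin: for the Ising model on a finite graph G=(V,E) with field h and p_{ij}=1-exp(-2βJ_{ij}), λ_{β,h,V}(σ_x = ±1) = 1/2 ± (1/2) φ_{p,h,G}(tanh(h(K_t))), where K_t is the connected component of x under the random-cluster measure φ_{p,h,G} and h(K) = β Σ_{i∈K} h_i. Consequently λ_{β,h,V}(σ_x) = φ_{p,h,G}(tanh(h(K_t))). -/

import Mathlib

open Finset

noncomputable section

variable {V : Type}

/-- The spin value (±1) attached to a Boolean spin (`true ↔ +1`, `false ↔ -1`). -/
def spin (b : Bool) : ℝ := if b then 1 else -1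

/-- The subgraph of `G` whose open edges are the edges in `F`. -/
def openSub (G : SimpleGraph V) (F : Finset (Sym2 V)) : SimpleGraph V where
  Adj i j := G.Adj i j ∧ s(i, j) ∈ F
  symm := by
    constructor
    intro i j h
    exact ⟨h.1.symm, by rw [Sym2.eq_swap]; exact h.2⟩
  loopless := ⟨fun _ h => G.irrefl h.1⟩

instance [Fintype V] (H : SimpleGraph V) : Fintype H.ConnectedComponent := by
  classical exact Fintype.ofSurjective H.connectedComponentMk Quot.exists_rep

/-- The vertex set of a connected component, as a `Finset`. -/
def compSupp [Fintype V] (H : SimpleGraph V) (c : H.ConnectedComponent) : Finset V := by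
  classical exact Finset.univ.filter fun v => H.connectedComponentMk v = c

/-- Kronecker delta `δ_{σ_i,σ_j}` of a configuration on an (unordered) edge. -/
def eDelta {S : Type} [DecidableEq S] (σ : V → S) : Sym2 V → ℝ :=
  Sym2.lift ⟨fun i j => if σ i = σ j then 1 else 0, fun _ _ => by simp [eq_comm]⟩

/-- Product of spins `σ_i σ_j` on an (unordered) edge. -/
def eProd (σ : V → Bool) : Sym2 V → ℝ :=
  Sym2.lift ⟨fun i j => spin (σ i) * spin (σ j), fun _ _ => mul_comm _ _⟩

/-- The consistency indicator `Δ(σ,ω)`: equal to `1` iff `σ` is constant on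
every open edge of the configuration `F`. -/
def Delta (G : SimpleGraph V) (F : Finset (Sym2 V)) (σ : V → Bool) : ℝ := by
  classical exact if ∀ i j, G.Adj i j → s(i, j) ∈ F → σ i = σ j then 1 else 0

/-- The Bernoulli factor `B_J(ω) = ∏_{e open} p_e ∏_{e closed} (1-p_e)`. -/
def bern [Fintype V] [DecidableEq V] (G : SimpleGraph V) [DecidableRel G.Adj]
    (p : Sym2 V → ℝ) (F : Finset (Sym2 V)) : ℝ :=
  (∏ e ∈ F, p e) * ∏ e ∈ G.edgeFinset \ F, (1 - p e)

/-- The (unnormalized) Ising Boltzmann weight with free boundary condition. -/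
def isingW [Fintype V] [DecidableEq V] (G : SimpleGraph V) [DecidableRel G.Adj]
    (β : ℝ) (J : Sym2 V → ℝ) (h : V → ℝ) (σ : V → Bool) : ℝ :=
  Real.exp (β * ((∑ e ∈ G.edgeFinset, J e * eProd σ e) + ∑ i, h i * spin (σ i)))

/-- The random-cluster weight `B_J(ω) ∏_α 2cosh(β Σ_{i∈K_α} h_i)`. -/
def rcW [Fintype V] [DecidableEq V] (G : SimpleGraph V) [DecidableRel G.Adj]
    (β : ℝ) (p : Sym2 V → ℝ) (h : V → ℝ) (F : Finset (Sym2 V)) : ℝ :=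
  bern G p F * ∏ c : (openSub G F).ConnectedComponent,
    2 * Real.cosh (β * ∑ i ∈ compSupp (openSub G F) c, h i)

/-- Expectation of `f` under the random-cluster measure with external field. -/
def rcE [Fintype V] [DecidableEq V] (G : SimpleGraph V) [DecidableRel G.Adj]
    (β : ℝ) (p : Sym2 V → ℝ) (h : V → ℝ) (f : Finset (Sym2 V) → ℝ) : ℝ :=
  (∑ F ∈ G.edgeFinset.powerset, f F * rcW G β p h F) /
    ∑ F ∈ G.edgeFinset.powerset, rcW G β p h F

/-- `h(K_z) = β Σ_{i ∈ K_z} h_i` for the component `K_z` of `z` in `F`. -/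
def hK [Fintype V] [DecidableEq V] (G : SimpleGraph V) (β : ℝ) (h : V → ℝ)
    (F : Finset (Sym2 V)) (z : V) : ℝ :=
  β * ∑ i ∈ compSupp (openSub G F) ((openSub G F).connectedComponentMk z), h i

/-! Expanding every edge factor as `exp(βJσᵢσⱼ) = e^{βJ} (p δ(σᵢ,σⱼ) + 1 - p)` writes the Ising
weight as a sum over edge sets `F` of `bern F · Δ(σ,F) · exp(field energy)`. For fixed `F` the
spins compatible with `F` are the colourings of the open clusters, so the field term factorises
over clusters: a free cluster `K` contributes `2 cosh h(K)`, while the cluster of `x`, whose spin is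
fixed to `s`, contributes `e^{s h(K)} = 2 cosh h(K) · ½ (1 + s tanh h(K))`. Summing over `F` gives
the random-cluster weights; the ratio is well defined because the Ising partition function is a
sum of exponentials. -/

lemma spin_mul_self (b : Bool) : spin b * spin b = 1 := by
  cases b <;> simp [spin]

lemma sum_exp_mul_spin (t : ℝ) : ∑ b : Bool, Real.exp (t * spin b) = 2 * Real.cosh t := by
  rw [Fintype.sum_bool, Real.cosh_eq]
  simp only [spin, if_true, Bool.false_eq_true, if_false, mul_one, mul_neg_one]
  ring

lemma exp_mul_spin (t : ℝ) (b : Bool) :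
    Real.exp (t * spin b) = 2 * Real.cosh t * (1 / 2 * (1 + spin b * Real.tanh t)) := by
  have hcosh := (Real.cosh_pos t).ne'
  cases b
  · simp only [spin, Bool.false_eq_true, if_false, mul_neg_one, Real.tanh_eq_sinh_div_cosh]
    field_simp
    rw [← Real.cosh_sub_sinh]
    ring
  · simp only [spin, if_true, Real.tanh_eq_sinh_div_cosh]
    field_simp
    rw [Real.cosh_add_sinh]

lemma exp_mul_eProd (β : ℝ) (J p : Sym2 V → ℝ)
    (hp : ∀ e, p e = 1 - Real.exp (-(2 * β) * J e)) (σ : V → Bool) (e : Sym2 V) :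
    Real.exp (β * (J e * eProd σ e)) = Real.exp (β * J e) * (p e * eDelta σ e + (1 - p e)) := by
  induction e using Sym2.ind with
  | _ i j =>
    simp only [eProd, eDelta, Sym2.lift_mk, hp]
    by_cases hij : σ i = σ j
    · rw [if_pos hij, hij, spin_mul_self, mul_one, mul_one, sub_sub_cancel, sub_add_cancel, mul_one]
    · have hprod : spin (σ i) * spin (σ j) = -1 := by
        cases hi : σ i <;> cases hj : σ j <;> simp_all [spin]
      rw [if_neg hij, hprod, mul_zero, zero_add, sub_sub_cancel, ← Real.exp_add]
      congr 1
      ring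

lemma prod_eDelta_eq_Delta [Fintype V] [DecidableEq V] {G : SimpleGraph V} [DecidableRel G.Adj]
    {F : Finset (Sym2 V)} (hF : F ⊆ G.edgeFinset) (σ : V → Bool) :
    ∏ e ∈ F, eDelta σ e = Delta G F σ := by
  unfold Delta
  split_ifs with hconst
  · refine Finset.prod_eq_one fun e he => ?_
    induction e using Sym2.ind with
    | _ i j =>
      have hadj : G.Adj i j := by simpa [SimpleGraph.mem_edgeFinset] using hF he
      simp [eDelta, hconst i j hadj he]
  · push Not at hconst
    obtain ⟨i, j, -, hmem, hne⟩ := hconst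
    exact Finset.prod_eq_zero hmem (by simp [eDelta, hne])

lemma isingW_eq_sum_bern [Fintype V] [DecidableEq V] (G : SimpleGraph V) [DecidableRel G.Adj]
    (β : ℝ) (J : Sym2 V → ℝ) (h : V → ℝ) (p : Sym2 V → ℝ)
    (hp : ∀ e, p e = 1 - Real.exp (-(2 * β) * J e)) (σ : V → Bool) :
    isingW G β J h σ = (∏ e ∈ G.edgeFinset, Real.exp (β * J e)) *
      ∑ F ∈ G.edgeFinset.powerset,
        bern G p F * (Delta G F σ * Real.exp (β * ∑ i, h i * spin (σ i))) := by
  have hedges : ∏ e ∈ G.edgeFinset, Real.exp (β * (J e * eProd σ e)) =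
      (∏ e ∈ G.edgeFinset, Real.exp (β * J e)) *
        ∏ e ∈ G.edgeFinset, (p e * eDelta σ e + (1 - p e)) := by
    rw [← Finset.prod_mul_distrib]
    exact Finset.prod_congr rfl fun e _ => exp_mul_eProd β J p hp σ e
  rw [isingW, mul_add, Real.exp_add, Finset.mul_sum, Real.exp_sum, hedges, Finset.prod_add,
    mul_assoc, Finset.mul_sum, Finset.sum_mul]
  refine congrArg _ (Finset.sum_congr rfl fun F hF => ?_)
  rw [Finset.prod_mul_distrib, prod_eDelta_eq_Delta (Finset.mem_powerset.mp hF), bern]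
  ring

lemma SimpleGraph.Reachable.eq_of_forall_adj {α : Type*} {H : SimpleGraph V} {f : V → α}
    (hf : ∀ i j, H.Adj i j → f i = f j) {i j : V} (hr : H.Reachable i j) : f i = f j := by
  obtain ⟨w⟩ := hr
  induction w with
  | nil => rfl
  | cons hadj _ ih => exact (hf _ _ hadj).trans ih

lemma sum_filter_apply_eq_mul_prod_erase {ι κ R : Type*} [Fintype ι] [DecidableEq ι] [Fintype κ]
    [DecidableEq κ] [CommSemiring R] (f : ι → κ → R) (i₀ : ι) (k : κ) :
    ∑ τ ∈ Finset.univ.filter (fun τ : ι → κ => τ i₀ = k), ∏ i, f i (τ i) =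
      f i₀ k * ∏ i ∈ Finset.univ.erase i₀, ∑ b, f i b := by
  set t : ι → Finset κ := fun i => if i = i₀ then {k} else Finset.univ
  have hfilter : Finset.univ.filter (fun τ : ι → κ => τ i₀ = k) = Fintype.piFinset t := by
    ext τ
    simp only [Finset.mem_filter, Finset.mem_univ, true_and, Fintype.mem_piFinset, t]
    constructor
    · rintro hτ i
      split_ifs with hi
      · simp [hi, hτ]
      · exact Finset.mem_univ _
    · intro hτ
      simpa using hτ i₀
  rw [hfilter, ← Finset.prod_univ_sum, ← Finset.mul_prod_erase _ _ (Finset.mem_univ i₀)]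
  congr 1
  · simp [t]
  · exact Finset.prod_congr rfl fun i hi => by simp [t, Finset.ne_of_mem_erase hi]

lemma sum_mul_comp_connectedComponentMk [Fintype V] (H : SimpleGraph V) (h : V → ℝ)
    (f : H.ConnectedComponent → ℝ) :
    ∑ i, h i * f (H.connectedComponentMk i) = ∑ c, (∑ i ∈ compSupp H c, h i) * f c := by
  classical
  rw [← Finset.sum_fiberwise Finset.univ H.connectedComponentMk]
  refine Finset.sum_congr rfl fun c _ => ?_
  rw [Finset.sum_mul]
  refine Finset.sum_congr (by ext; simp [compSupp]) fun i hi => ?_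
  rw [(Finset.mem_filter.mp hi).2]

lemma Delta_comp_connectedComponentMk (G : SimpleGraph V) (F : Finset (Sym2 V))
    (τ : (openSub G F).ConnectedComponent → Bool) :
    Delta G F (τ ∘ (openSub G F).connectedComponentMk) = 1 := by
  refine if_pos fun i j hadj hmem => congrArg τ ?_
  exact SimpleGraph.ConnectedComponent.sound
    (show (openSub G F).Adj i j from ⟨hadj, hmem⟩).reachable

lemma Delta_eq_zero_of_notMem_range (G : SimpleGraph V) (F : Finset (Sym2 V)) {σ : V → Bool}
    (hσ : σ ∉ Set.range (· ∘ (openSub G F).connectedComponentMk)) : Delta G F σ = 0 := by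
  refine if_neg fun hconst => hσ ⟨fun c => σ c.out, funext fun v => ?_⟩
  exact SimpleGraph.Reachable.eq_of_forall_adj
    (fun i j (hadj : (openSub G F).Adj i j) => hconst i j hadj.1 hadj.2)
    (SimpleGraph.ConnectedComponent.exact ((openSub G F).connectedComponentMk v).out_eq)

open scoped Classical in
lemma sum_Delta_mul_eq_sum_comp [Fintype V] [DecidableEq V] (G : SimpleGraph V)
    (F : Finset (Sym2 V)) (g : (V → Bool) → ℝ) :
    ∑ σ, Delta G F σ * g σ =
      ∑ τ : (openSub G F).ConnectedComponent → Bool, g (τ ∘ (openSub G F).connectedComponentMk) :=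
  (Fintype.sum_of_injective (· ∘ (openSub G F).connectedComponentMk)
    (Function.Surjective.injective_comp_right fun c => ⟨c.out, c.out_eq⟩) _ _
    (fun σ hσ => by rw [Delta_eq_zero_of_notMem_range G F hσ, zero_mul])
    (fun τ => by rw [Delta_comp_connectedComponentMk G F τ, one_mul])).symm

open scoped Classical in
lemma sum_filter_Delta_mul_exp [Fintype V] [DecidableEq V] (G : SimpleGraph V)
    (F : Finset (Sym2 V)) (β : ℝ) (h : V → ℝ) (x : V) (s : Bool) :
    ∑ σ ∈ Finset.univ.filter (fun σ : V → Bool => σ x = s),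
        Delta G F σ * Real.exp (β * ∑ i, h i * spin (σ i)) =
      (∏ c : (openSub G F).ConnectedComponent,
          2 * Real.cosh (β * ∑ i ∈ compSupp (openSub G F) c, h i)) *
        (1 / 2 * (1 + spin s * Real.tanh (hK G β h F x))) := by
  set m := (openSub G F).connectedComponentMk
  set S : (openSub G F).ConnectedComponent → ℝ := fun c => ∑ i ∈ compSupp (openSub G F) c, h i
  have hfield : ∀ τ : (openSub G F).ConnectedComponent → Bool,
      Real.exp (β * ∑ i, h i * spin (τ (m i))) = ∏ c, Real.exp (β * S c * spin (τ c)) := by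
    intro τ
    rw [← Real.exp_sum, sum_mul_comp_connectedComponentMk _ h (fun c => spin (τ c)),
      Finset.mul_sum]
    simp only [S, mul_assoc]
  calc ∑ σ ∈ Finset.univ.filter (fun σ : V → Bool => σ x = s),
        Delta G F σ * Real.exp (β * ∑ i, h i * spin (σ i))
      = ∑ σ, Delta G F σ * if σ x = s then Real.exp (β * ∑ i, h i * spin (σ i)) else 0 := by
        simp only [Finset.sum_filter, mul_ite, mul_zero]
    _ = ∑ τ ∈ Finset.univ.filter (fun τ : (openSub G F).ConnectedComponent → Bool => τ (m x) = s),
          ∏ c, Real.exp (β * S c * spin (τ c)) := by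
        rw [sum_Delta_mul_eq_sum_comp, Finset.sum_filter]
        exact Finset.sum_congr rfl fun τ _ => congrArg (ite _ · 0) (hfield τ)
    _ = Real.exp (β * S (m x) * spin s) *
          ∏ c ∈ Finset.univ.erase (m x), 2 * Real.cosh (β * S c) := by
        rw [sum_filter_apply_eq_mul_prod_erase (fun c b => Real.exp (β * S c * spin b))]
        simp only [sum_exp_mul_spin]
    _ = _ := by
        rw [← Finset.mul_prod_erase Finset.univ _ (Finset.mem_univ (m x)), exp_mul_spin]
        simp only [hK, S, m]
        ring

lemma sum_filter_isingW_eq [Fintype V] [DecidableEq V] (G : SimpleGraph V) [DecidableRel G.Adj]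
    (β : ℝ) (J : Sym2 V → ℝ) (h : V → ℝ) (p : Sym2 V → ℝ)
    (hp : ∀ e, p e = 1 - Real.exp (-(2 * β) * J e)) (x : V) (s : Bool) :
    ∑ σ ∈ Finset.univ.filter (fun σ : V → Bool => σ x = s), isingW G β J h σ =
      (∏ e ∈ G.edgeFinset, Real.exp (β * J e)) *
        (1 / 2 * ∑ F ∈ G.edgeFinset.powerset, rcW G β p h F +
          spin s * (1 / 2 * ∑ F ∈ G.edgeFinset.powerset,
            Real.tanh (hK G β h F x) * rcW G β p h F)) := by
  set C := ∏ e ∈ G.edgeFinset, Real.exp (β * J e)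
  calc ∑ σ ∈ Finset.univ.filter (fun σ : V → Bool => σ x = s), isingW G β J h σ
      = C * ∑ F ∈ G.edgeFinset.powerset, bern G p F *
          ∑ σ ∈ Finset.univ.filter (fun σ : V → Bool => σ x = s),
            Delta G F σ * Real.exp (β * ∑ i, h i * spin (σ i)) := by
        simp only [isingW_eq_sum_bern G β J h p hp, ← Finset.mul_sum]
        rw [Finset.sum_comm]
        exact congrArg (C * ·) (Finset.sum_congr rfl fun F _ => (Finset.mul_sum _ _ _).symm)
    _ = C * ∑ F ∈ G.edgeFinset.powerset, (1 / 2 * rcW G β p h F +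
          spin s * (1 / 2 * (Real.tanh (hK G β h F x) * rcW G β p h F))) := by
        refine congrArg (C * ·) (Finset.sum_congr rfl fun F _ => ?_)
        rw [sum_filter_Delta_mul_exp, rcW]
        ring
    _ = _ := by
        rw [Finset.sum_add_distrib, ← Finset.mul_sum, ← Finset.mul_sum, ← Finset.mul_sum]

open scoped Classical in
theorem statement11_general [Fintype V] [DecidableEq V]
    (G : SimpleGraph V) [DecidableRel G.Adj]
    (β : ℝ)
    (J : Sym2 V → ℝ)
    (h : V → ℝ)
    (p : Sym2 V → ℝ) (hp : ∀ e, p e = 1 - Real.exp (-(2 * β) * J e))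
    (x : V) :
    (∀ s : Bool,
      (∑ σ ∈ Finset.univ.filter (fun σ : V → Bool => σ x = s), isingW G β J h σ) /
          (∑ σ : V → Bool, isingW G β J h σ)
        = 1 / 2 + spin s * (1 / 2 * rcE G β p h (fun F => Real.tanh (hK G β h F x))))
    ∧ (∑ σ : V → Bool, spin (σ x) * isingW G β J h σ) /
          (∑ σ : V → Bool, isingW G β J h σ)
        = rcE G β p h (fun F => Real.tanh (hK G β h F x)) := by
  set C := ∏ e ∈ G.edgeFinset, Real.exp (β * J e)
  set Z := ∑ F ∈ G.edgeFinset.powerset, rcW G β p h F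
  set T := ∑ F ∈ G.edgeFinset.powerset, Real.tanh (hK G β h F x) * rcW G β p h F
  have hkey : ∀ s : Bool, ∑ σ ∈ Finset.univ.filter (fun σ : V → Bool => σ x = s),
      isingW G β J h σ = C * (1 / 2 * Z + spin s * (1 / 2 * T)) :=
    sum_filter_isingW_eq G β J h p hp x
  have hpartition : ∑ σ : V → Bool, isingW G β J h σ = C * Z := by
    rw [← Finset.sum_fiberwise Finset.univ (fun σ : V → Bool => σ x), Fintype.sum_bool, hkey, hkey]
    simp only [spin, if_true, Bool.false_eq_true, if_false]
    ring
  have hmagnetization : ∑ σ : V → Bool, spin (σ x) * isingW G β J h σ = C * T := by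
    rw [← Finset.sum_fiberwise Finset.univ (fun σ : V → Bool => σ x), Fintype.sum_bool]
    have hfiber : ∀ s : Bool, ∑ σ ∈ Finset.univ.filter (fun σ : V → Bool => σ x = s),
        spin (σ x) * isingW G β J h σ = spin s * C * (1 / 2 * Z + spin s * (1 / 2 * T)) := by
      intro s
      rw [mul_assoc, ← hkey, Finset.mul_sum]
      exact Finset.sum_congr rfl fun σ hσ => by rw [(Finset.mem_filter.mp hσ).2]
    rw [hfiber, hfiber]
    simp only [spin, if_true, Bool.false_eq_true, if_false]
    ring
  have hC : 0 < C := Finset.prod_pos fun _ _ => Real.exp_pos _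
  have hZ : 0 < Z := pos_of_mul_pos_right (hpartition ▸ Finset.sum_pos
    (fun σ _ => Real.exp_pos _) Finset.univ_nonempty) hC.le
  have hrcE : rcE G β p h (fun F => Real.tanh (hK G β h F x)) = T / Z := rfl
  refine ⟨fun s => ?_, ?_⟩
  · rw [hkey, hpartition, hrcE]
    field_simp
  · rw [hmagnetization, hpartition, hrcE, mul_div_mul_left T Z hC.ne']

open scoped Classical in
/-- Theorem (distribution function of a single spin) and its corollary: the
sign `±1` is encoded by `s : Bool` with `spin s = ±1`, so the first claim reads
`λ(σ_x = ±1) = 1/2 ± (1/2) φ(tanh h(K_t))`; the second claim is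
`λ(σ_x) = φ(tanh h(K_t))`. -/
theorem statement11 [Fintype V] [DecidableEq V]
    (G : SimpleGraph V) [DecidableRel G.Adj]
    (β : ℝ) (hβ : 0 < β)
    (J : Sym2 V → ℝ) (hJ : ∀ e ∈ G.edgeFinset, 0 ≤ J e)
    (h : V → ℝ)
    (p : Sym2 V → ℝ) (hp : ∀ e, p e = 1 - Real.exp (-(2 * β) * J e))
    (x : V) :
    (∀ s : Bool,
      (∑ σ ∈ Finset.univ.filter (fun σ : V → Bool => σ x = s), isingW G β J h σ) /
          (∑ σ : V → Bool, isingW G β J h σ)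
        = 1 / 2 + spin s * (1 / 2 * rcE G β p h (fun F => Real.tanh (hK G β h F x))))
    ∧ (∑ σ : V → Bool, spin (σ x) * isingW G β J h σ) /
          (∑ σ : V → Bool, isingW G β J h σ)
        = rcE G β p h (fun F => Real.tanh (hK G β h F x)) :=
  statement11_general G β J h p hp x
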